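/- In the free L-algebra realized on the set N of normal words, the product [u ≺ v] satisfies the recursion: [u ≺ v] = u ≺ v if u ∈ X or u = u_1 ≺ u_2, and [u ≺ v] = u_1 ≻ [u_2 ≺ v] if u = u_1 ≻ u_2; moreover [u ≻ v] = u ≻ v for all normal words u, v. -/
import Mathlib


/-- Ω-words for Ω = {≺, ≻}: `p u v` denotes u ≺ v and `s u v` denotes u ≻ v. -/
inductive LW (X : Type) : Type
  | var : X → LW X
  | p : LW X → LW X → LW X
  | s : LW X → LW X → LW X
deriving DecidableEq

namespace LW

variable {X : Type}

/-- number of occurrences of variables, |u|_X -/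
def szX : LW X → ℕ
  | var _ => 1
  | p u v => szX u + szX v
  | s u v => szX u + szX v

/-- The weight-lexicographic ordering on Ω-words: wt(x) = (1,x),
wt(δᵢ(u₁,u₂)) = (|u|_X, δᵢ, u₁, u₂) with ≻ < ≺, compared lexicographically. -/
inductive LLt [LinearOrder X] : LW X → LW X → Prop
  | size {u v : LW X} : szX u < szX v → LLt u v
  | var {x y : X} : x < y → LLt (var x) (var y)
  | sp {u1 u2 v1 v2 : LW X} : szX (s u1 u2) = szX (p v1 v2) → LLt (s u1 u2) (p v1 v2)
  | s1 {u1 u2 v1 v2 : LW X} : szX (s u1 u2) = szX (s v1 v2) → LLt u1 v1 →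
      LLt (s u1 u2) (s v1 v2)
  | s2 {u1 u2 v2 : LW X} : szX (s u1 u2) = szX (s u1 v2) → LLt u2 v2 →
      LLt (s u1 u2) (s u1 v2)
  | p1 {u1 u2 v1 v2 : LW X} : szX (p u1 u2) = szX (p v1 v2) → LLt u1 v1 →
      LLt (p u1 u2) (p v1 v2)
  | p2 {u1 u2 v2 : LW X} : szX (p u1 u2) = szX (p u1 v2) → LLt u2 v2 →
      LLt (p u1 u2) (p u1 v2)

/-- Normal words: x ∈ X is normal; v ≻ w is normal if v, w are; v ≺ w is normal
if v, w are normal and v is not of the form v₁ ≻ v₂. -/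
inductive Normal : LW X → Prop
  | var {x : X} : Normal (var x)
  | suc {u v : LW X} : Normal u → Normal v → Normal (s u v)
  | pre {u v : LW X} : Normal u → Normal v → (∀ a b, u ≠ s a b) → Normal (p u v)

end LW

/-- A ⋆-Ω-word for Ω = {≺,≻}. -/
inductive LCtx (X : Type) : Type
  | hole : LCtx X
  | pL : LCtx X → LW X → LCtx X
  | pR : LW X → LCtx X → LCtx X
  | sL : LCtx X → LW X → LCtx X
  | sR : LW X → LCtx X → LCtx X

/-- Substitution of an Ω-word for ⋆ in a ⋆-Ω-word. -/
def LCtx.subst {X : Type} : LCtx X → LW X → LW X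
  | .hole, u => u
  | .pL c w, u => .p (c.subst u) w
  | .pR w c, u => .p w (c.subst u)
  | .sL c w, u => .s (c.subst u) w
  | .sR w c, u => .s w (c.subst u)
section

variable {X k : Type} [Field k]

/-- The free Ω-algebra k(X,Ω), Ω = {≺,≻}. -/
abbrev LPoly (X k : Type) [Field k] := LW X →₀ k

/-- The s-Ω-word u|_s, extended linearly. -/
noncomputable def applyC (c : LCtx X) (f : LPoly X k) : LPoly X k :=
  Finsupp.mapDomain c.subst f

/-- The Ω-ideal of k(X,Ω) generated by all (x≻y)≺z − x≻(y≺z). -/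
noncomputable def LRelId (X k : Type) [Field k] : Submodule k (LPoly X k) :=
  Submodule.span k {g | ∃ (c : LCtx X) (x y z : LW X),
    g = applyC c (Finsupp.single (.p (.s x y) z) (1 : k)
          - Finsupp.single (.s x (.p y z)) (1 : k))}

/-- The free L-algebra L(X) = k(X,Ω)/Id((x≻y)≺z − x≻(y≺z)). -/
abbrev FreeL (X k : Type) [Field k] := LPoly X k ⧸ LRelId X k

/-- The image of an Ω-word in the free L-algebra. -/
noncomputable def lmk (X k : Type) [Field k] (w : LW X) : FreeL X k :=
  Submodule.Quotient.mk (Finsupp.single w (1 : k))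

end
/-- `NFrel k u w`: w is the normal form [u] of the Ω-word u in L(X). -/
def NFrel (X k : Type) [Field k] (u w : LW X) : Prop :=
  LW.Normal w ∧ lmk X k u = lmk X k w

def LCtx.comp {X : Type} : LCtx X → LCtx X → LCtx X
  | .hole, c' => c'
  | .pL c w, c' => .pL (c.comp c') w
  | .pR w c, c' => .pR w (c.comp c')
  | .sL c w, c' => .sL (c.comp c') w
  | .sR w c, c' => .sR w (c.comp c')

lemma LCtx.comp_subst {X : Type} (c c' : LCtx X) (u : LW X) :
    (c.comp c').subst u = c.subst (c'.subst u) := by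
  induction c <;> simp [LCtx.comp, LCtx.subst, *]

lemma applyC_mem {X k : Type} [Field k] (c : LCtx X) {f : LPoly X k}
    (hf : f ∈ LRelId X k) : applyC c f ∈ LRelId X k := by
  induction hf using Submodule.span_induction with
  | mem g hg =>
    obtain ⟨c', x, y, z, rfl⟩ := hg
    apply Submodule.subset_span
    refine ⟨c.comp c', x, y, z, ?_⟩
    simp only [applyC, ← Finsupp.mapDomain_comp]
    congr 1
    funext u
    exact (LCtx.comp_subst c c' u).symm
  | zero => simp [applyC]
  | add a b _ _ ha hb => simpa [applyC, Finsupp.mapDomain_add] using add_mem ha hb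
  | smul r a _ ha =>
      simpa [applyC, Finsupp.mapDomain_smul] using Submodule.smul_mem _ r ha

lemma applyC_single_sub_single {X k : Type} [Field k] (c : LCtx X) (a b : LW X) :
    applyC c (Finsupp.single a (1 : k) - Finsupp.single b (1 : k))
      = Finsupp.single (c.subst a) (1 : k) - Finsupp.single (c.subst b) (1 : k) := by
  have := map_sub (Finsupp.mapDomain.addMonoidHom (M := k) c.subst)
    (Finsupp.single a (1 : k)) (Finsupp.single b (1 : k))
  simpa [applyC, Finsupp.mapDomain.addMonoidHom, Finsupp.mapDomain_single] using this

lemma lmk_eq_of_sub_mem {X k : Type} [Field k] {a b : LW X}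
    (h : Finsupp.single a (1 : k) - Finsupp.single b (1 : k) ∈ LRelId X k) :
    lmk X k a = lmk X k b := by
  rw [lmk, lmk, Submodule.Quotient.eq]
  exact h

lemma lmk_ctx {X k : Type} [Field k] (c : LCtx X) {a b : LW X}
    (h : lmk X k a = lmk X k b) : lmk X k (c.subst a) = lmk X k (c.subst b) := by
  apply lmk_eq_of_sub_mem
  rw [← applyC_single_sub_single]
  apply applyC_mem
  rw [lmk, lmk, Submodule.Quotient.eq] at h
  exact h

/-- in the free L-algebra realized on normal words, [u ≻ v] = u ≻ v,
[u ≺ v] = u ≺ v if u is a variable or u = u₁ ≺ u₂, and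
[u ≺ v] = u₁ ≻ [u₂ ≺ v] if u = u₁ ≻ u₂. -/
theorem normal_form_recursion (X k : Type) [Field k] :
    (∀ u v : LW X, LW.Normal u → LW.Normal v → NFrel X k (.s u v) (.s u v)) ∧
    (∀ u v : LW X, LW.Normal u → LW.Normal v →
      ((∃ x, u = .var x) ∨ (∃ u1 u2, u = .p u1 u2)) → NFrel X k (.p u v) (.p u v)) ∧
    (∀ u1 u2 v w : LW X, LW.Normal (.s u1 u2) → LW.Normal v →
      NFrel X k (.p u2 v) w → NFrel X k (.p (.s u1 u2) v) (.s u1 w)) := by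
  refine ⟨fun u v hu hv => ⟨LW.Normal.suc hu hv, rfl⟩,
    fun u v hu hv h => ⟨LW.Normal.pre hu hv ?_, rfl⟩,
    fun u1 u2 v w hu hv hw => ?_⟩
  · rintro a b rfl
    rcases h with ⟨x, h⟩ | ⟨a', b', h⟩ <;> exact absurd h (by simp)
  · obtain ⟨hu1, hu2⟩ : LW.Normal u1 ∧ LW.Normal u2 := by
      cases hu with | suc h1 h2 => exact ⟨h1, h2⟩
    refine ⟨LW.Normal.suc hu1 hw.1, ?_⟩
    have h1 : lmk X k (.p (.s u1 u2) v) = lmk X k (.s u1 (.p u2 v)) := by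
      apply lmk_eq_of_sub_mem
      exact Submodule.subset_span ⟨LCtx.hole, u1, u2, v, by simp only [applyC, LCtx.subst]; exact Finsupp.mapDomain_id.symm⟩
    have h2 := lmk_ctx (k := k) (LCtx.sR u1 LCtx.hole) hw.2
    simpa [LCtx.subst] using h1.trans h2
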